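/- arXiv:1910.03859 — 2 statements merged into one kernel-verified Lean document; each statement's English description precedes it below -/
import Mathlib

section
/- Let k be a field and λ ∈ k with λ ≠ 0 and λ ≠ 1. The k-algebra homomorphism φ : k[x,y] → k[t] × k[t] × k[t] determined by φ(x) = (0, t², λt²) and φ(y) = (t, t, t) has kernel exactly the principal ideal generated by F = x(x−y²)(x−λy²). Consequently the ring R = k[x,y]/(F) (the coordinate ring of the plane curve singularity of type T₃₆) embeds into k[t] × k[t] × k[t] via x ↦ (0, t², λt²), y ↦ (t, t, t). -/
open MvPolynomial

noncomputable section

/-- `x = X 0` and `y = X 1` in `k[x,y]`. -/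
def T36.F {k : Type} [Field k] (lam : k) : MvPolynomial (Fin 2) k :=
  X 0 * (X 0 - X 1 ^ 2) * (X 0 - C lam * X 1 ^ 2)

/-- The `k`-algebra homomorphism `k[x,y] → k[t] × k[t] × k[t]` with
`x ↦ (0, t², λ t²)` and `y ↦ (t, t, t)`. -/
def T36.phi {k : Type} [Field k] (lam : k) :
    MvPolynomial (Fin 2) k →ₐ[k] Polynomial k × Polynomial k × Polynomial k :=
  aeval (fun i : Fin 2 =>
    if i = 0 then ((0, Polynomial.X ^ 2, Polynomial.C lam * Polynomial.X ^ 2) :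
        Polynomial k × Polynomial k × Polynomial k)
    else ((Polynomial.X, Polynomial.X, Polynomial.X) :
        Polynomial k × Polynomial k × Polynomial k))

/-! Under `k[x,y] ≅ k[t][X]` (`y ↦ t`, `x ↦ X`) the map `φ` becomes evaluation of polynomials over
the domain `k[t]` at the three distinct points `0`, `t²`, `λt²`, and `F` becomes
`X (X - t²) (X - λt²)`. A polynomial over a domain vanishing at distinct points is divisible by
the product of the corresponding linear factors, so `ker φ = (F)`, and `φ` factors through an
injective map on `k[x,y]/(F)`. -/

namespace Polynomial

variable {A : Type*} [CommRing A] [IsDomain A]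

theorem prod_X_sub_C_dvd_of_forall_eval_eq_zero {p : A[X]} {s : Finset A}
    (h : ∀ a ∈ s, p.eval a = 0) : ∏ a ∈ s, (X - C a) ∣ p := by
  rcases eq_or_ne p 0 with rfl | hp
  · exact dvd_zero _
  rw [Finset.prod_eq_multiset_prod]
  exact (Multiset.prod_X_sub_C_dvd_iff_le_roots hp s.val).mpr
    ((Multiset.le_iff_subset s.nodup).mpr fun a ha => (mem_roots hp).mpr (h a ha))

theorem ker_aeval_prod_aeval_prod_aeval {a b c : A} (hab : a ≠ b) (hac : a ≠ c) (hbc : b ≠ c) :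
    RingHom.ker ((aeval a).prod ((aeval b).prod (aeval c)) : A[X] →ₐ[A] A × A × A) =
      Ideal.span {(X - C a) * (X - C b) * (X - C c)} := by
  classical
  ext p
  simp only [RingHom.mem_ker, Ideal.mem_span_singleton]
  constructor
  · intro hp
    have := prod_X_sub_C_dvd_of_forall_eval_eq_zero (p := p) (s := {a, b, c})
      (by simpa [Prod.ext_iff] using hp)
    rwa [Finset.prod_insert (by simp [hab, hac]), Finset.prod_pair hbc, ← mul_assoc] at this
  · rintro ⟨q, rfl⟩
    simp [Prod.ext_iff]

theorem X_pow_ne_C_mul_X_pow {c : A} (hc : c ≠ 1) (n : ℕ) : (X ^ n : A[X]) ≠ C c * X ^ n := by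
  intro h
  refine hc (C_injective ?_)
  rw [C_1]
  exact (mul_right_cancel₀ (pow_ne_zero n X_ne_zero) (by rw [one_mul]; exact h)).symm

end Polynomial

namespace MvPolynomial

variable (R : Type*) [CommRing R]

def finTwoEquiv : MvPolynomial (Fin 2) R ≃ₐ[R] Polynomial (Polynomial R) :=
  (finSuccEquiv R 1).trans (Polynomial.mapAlgEquiv (uniqueAlgEquiv R (Fin 1)))

@[simp]
theorem finTwoEquiv_C (r : R) : finTwoEquiv R (C r) = Polynomial.C (Polynomial.C r) :=
  (finTwoEquiv R).commutes r

@[simp]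
theorem finTwoEquiv_X_zero : finTwoEquiv R (X 0) = Polynomial.X := by
  simp only [finTwoEquiv, AlgEquiv.trans_apply, finSuccEquiv_X_zero, Polynomial.coe_mapAlgEquiv,
    Polynomial.map_X]

@[simp]
theorem finTwoEquiv_X_one : finTwoEquiv R (X 1) = Polynomial.C Polynomial.X := by
  simp only [finTwoEquiv, AlgEquiv.trans_apply, show (1 : Fin 2) = Fin.succ 0 from rfl,
    finSuccEquiv_X_succ, Polynomial.coe_mapAlgEquiv, Polynomial.map_C]
  simp

end MvPolynomial

namespace T36

variable {k : Type} [Field k]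

theorem phi_eq_comp (lam : k) : phi lam =
    (((Polynomial.aeval 0).prod ((Polynomial.aeval (Polynomial.X ^ 2)).prod
      (Polynomial.aeval (Polynomial.C lam * Polynomial.X ^ 2)))).restrictScalars k).comp
      (finTwoEquiv k).toAlgHom := by
  refine MvPolynomial.algHom_ext fun i => ?_
  fin_cases i <;> simp [phi]

theorem finTwoEquiv_F (lam : k) : finTwoEquiv k (F lam) =
    Polynomial.X * (Polynomial.X - Polynomial.C (Polynomial.X ^ 2)) *
      (Polynomial.X - Polynomial.C (Polynomial.C lam * Polynomial.X ^ 2)) := by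
  simp [F]

theorem ker_phi {lam : k} (h0 : lam ≠ 0) (h1 : lam ≠ 1) :
    RingHom.ker (phi lam) = Ideal.span {F lam} := by
  have hX : (Polynomial.X ^ 2 : Polynomial k) ≠ 0 := pow_ne_zero 2 Polynomial.X_ne_zero
  have hker := Polynomial.ker_aeval_prod_aeval_prod_aeval hX.symm
    (mul_ne_zero (Polynomial.C_ne_zero.mpr h0) hX).symm (Polynomial.X_pow_ne_C_mul_X_pow h1 2)
  rw [Polynomial.C_0, sub_zero, ← finTwoEquiv_F] at hker
  ext p
  rw [RingHom.mem_ker, phi_eq_comp, AlgHom.comp_apply, AlgHom.restrictScalars_apply,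
    ← RingHom.mem_ker, hker, Ideal.mem_span_singleton, Ideal.mem_span_singleton]
  exact map_dvd_iff _

end T36

theorem T36_kernel_of_normalization (k : Type) [Field k] (lam : k)
    (h0 : lam ≠ 0) (h1 : lam ≠ 1) :
    RingHom.ker (T36.phi lam : MvPolynomial (Fin 2) k →ₐ[k]
        Polynomial k × Polynomial k × Polynomial k) = Ideal.span {T36.F lam} ∧
    ∃ ψ : (MvPolynomial (Fin 2) k ⧸ Ideal.span {T36.F lam}) →ₐ[k]
        Polynomial k × Polynomial k × Polynomial k,
      Function.Injective ψ ∧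
      ψ.comp (Ideal.Quotient.mkₐ k (Ideal.span {T36.F lam})) = T36.phi lam := by
  refine ⟨T36.ker_phi h0 h1, ?_⟩
  rw [← T36.ker_phi h0 h1]
  exact ⟨Ideal.kerLiftAlg _, Ideal.kerLiftAlg_injective _, AlgHom.ext fun _ => rfl⟩
end
end

section
/- Let k be a field and λ ∈ k with λ ≠ 0 and λ ≠ 1. Then there is an isomorphism of k-algebras k[x,y]/(x(x−y²), x−λy²) ≅ k[y]/(y⁴); in particular, the quotient k[x,y]/(x(x−y²), x−λy²) has dimension 4 as a k-vector space. (This computes Ext¹_R(R₃, R₁₂) ≅ R₁₂/(x−λy²)R₁₂ for the T₃₆ singularity, confirming the basis 1₁₂, t₁₂, t₁², t₁³ listed in the paper's table.) -/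
/-!
Modulo `x - p(y)` every polynomial `g(x, y)` is congruent to `g(p(y), y)`, so eliminating `x`
identifies `k[x,y]/(g, x - p(y))` with `k[y]/(g(p(y), y))`. For `g = x(x - y²)` and
`p = λy²` this generator is `λ(λ - 1)y⁴`, an associate of `y⁴` since `λ(λ - 1)` is a unit.
-/

open MvPolynomial

namespace MvPolynomial

variable {R : Type*} [CommRing R] (g : MvPolynomial (Fin 2) R) (p : Polynomial R)

local notation "I" => Ideal.span {g, X 0 - Polynomial.aeval (X 1) p}
local notation "J" => Ideal.span {aeval ![p, Polynomial.X] g}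

theorem mk_aeval_X_one_aeval_eq_mk (a : MvPolynomial (Fin 2) R) :
    Ideal.Quotient.mk I (Polynomial.aeval (X 1) (aeval ![p, Polynomial.X] a)) =
      Ideal.Quotient.mk I a := by
  suffices h : (Ideal.Quotient.mkₐ R I).comp
      ((Polynomial.aeval (X 1)).comp (aeval ![p, Polynomial.X])) = Ideal.Quotient.mkₐ R I from
    congrArg (· a) h
  refine MvPolynomial.algHom_ext fun i => ?_
  fin_cases i
  · simp only [AlgHom.comp_apply, aeval_X, Ideal.Quotient.mkₐ_eq_mk]
    exact (Ideal.Quotient.eq.mpr (Ideal.subset_span (by simp))).symm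
  · simp

noncomputable def quotientSpanXZeroSubAlgEquiv :
    (MvPolynomial (Fin 2) R ⧸ I) ≃ₐ[R] Polynomial R ⧸ J := by
  refine AlgEquiv.ofAlgHom
    (Ideal.quotientMapₐ J (aeval ![p, Polynomial.X]) ?_)
    (Ideal.quotientMapₐ I (Polynomial.aeval (X 1)) ?_) ?_ ?_
  · rw [Ideal.span_le]
    rintro a (rfl | rfl)
    · exact Ideal.mem_span_singleton_self _
    · simp [← Polynomial.aeval_algHom_apply]
  · rw [Ideal.span_le, Set.singleton_subset_iff, SetLike.mem_coe, Ideal.mem_comap,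
      ← Ideal.Quotient.eq_zero_iff_mem, mk_aeval_X_one_aeval_eq_mk,
      Ideal.Quotient.eq_zero_iff_mem]
    exact Ideal.subset_span (by simp)
  · refine Ideal.Quotient.algHom_ext R (Polynomial.algHom_ext ?_)
    simp
  · refine Ideal.Quotient.algHom_ext R (AlgHom.ext fun a => ?_)
    exact mk_aeval_X_one_aeval_eq_mk g p a

end MvPolynomial

theorem T36_ext_computation (k : Type) [Field k] (lam : k) (h0 : lam ≠ 0) (h1 : lam ≠ 1) :
    Nonempty ((MvPolynomial (Fin 2) k ⧸
        (Ideal.span {X 0 * (X 0 - X 1 ^ 2), X 0 - C lam * X 1 ^ 2} :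
          Ideal (MvPolynomial (Fin 2) k))) ≃ₐ[k]
      (Polynomial k ⧸ (Ideal.span {(Polynomial.X : Polynomial k) ^ 4} :
          Ideal (Polynomial k)))) ∧
    Module.finrank k (MvPolynomial (Fin 2) k ⧸
        (Ideal.span {X 0 * (X 0 - X 1 ^ 2), X 0 - C lam * X 1 ^ 2} :
          Ideal (MvPolynomial (Fin 2) k))) = 4 := by
  have hsubst : Polynomial.aeval (X 1) (Polynomial.C lam * Polynomial.X ^ 2) =
      (C lam * X 1 ^ 2 : MvPolynomial (Fin 2) k) := by
    simp [MvPolynomial.algebraMap_eq]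
  have heval : aeval ![Polynomial.C lam * Polynomial.X ^ 2, Polynomial.X]
      (X 0 * (X 0 - X 1 ^ 2) : MvPolynomial (Fin 2) k) =
        Polynomial.C (lam * (lam - 1)) * Polynomial.X ^ 4 := by
    simp only [map_mul, map_sub, map_pow, aeval_X, Matrix.cons_val_zero, Matrix.cons_val_one,
      Polynomial.C_1]
    ring
  have hJ : Ideal.span {aeval ![Polynomial.C lam * Polynomial.X ^ 2, Polynomial.X]
      (X 0 * (X 0 - X 1 ^ 2) : MvPolynomial (Fin 2) k)} = Ideal.span {Polynomial.X ^ 4} := by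
    have hunit : IsUnit (Polynomial.C (lam * (lam - 1))) :=
      Polynomial.isUnit_C.mpr (mul_ne_zero h0 (sub_ne_zero.mpr h1)).isUnit
    rw [heval, Ideal.span_singleton_mul_left_unit hunit]
  rw [← hsubst]
  let e := (quotientSpanXZeroSubAlgEquiv _ _).trans (Ideal.quotientEquivAlgOfEq k hJ)
  refine ⟨⟨e⟩, ?_⟩
  rw [e.toLinearEquiv.finrank_eq, finrank_quotient_span_eq_natDegree, Polynomial.natDegree_X_pow]
end
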